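/- arXiv:2104.14872 — 4 statements merged into one kernel-verified Lean document; each statement's English description precedes it below -/
import Mathlib

section
/- Let A and B be m×n binary matrices and let k > 1 be an integer. If the set R^k(A,B) of row patterns of M^k(A,B) is totally ordered by the relation ≤, then the graph G^k(A,B) is word-representable. -/
/-- A word `w` over alphabet `V` represents the graph `G`: every vertex occurs in `w`,
and two distinct vertices are adjacent iff their letters alternate in `w`. -/
def WordRepresents {V : Type*} [DecidableEq V] (w : List V) (G : SimpleGraph V) : Prop :=
  (∀ v : V, v ∈ w) ∧
  ∀ x y : V, x ≠ y →
    (G.Adj x y ↔ (w.filter (fun z => z == x || z == y)).Chain' (· ≠ ·))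

/-- A graph is word-representable if some word represents it. -/
def WordRepresentable {V : Type*} [DecidableEq V] (G : SimpleGraph V) : Prop :=
  ∃ w : List V, WordRepresents w G

/-- The split graph `G(M)` of an `m × n` binary matrix `M`: vertices `Sum.inl j`
(`j : Fin n`) form a clique, vertices `Sum.inr i` (`i : Fin m`) form an independent set,
and `Sum.inr i` is adjacent to `Sum.inl j` iff `M i j = true`. -/
def splitGraph {m n : ℕ} (M : Fin m → Fin n → Bool) : SimpleGraph (Fin n ⊕ Fin m) :=
  SimpleGraph.fromRel (fun x y =>
    match x, y with
    | Sum.inl _, Sum.inl _ => True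
    | Sum.inl j, Sum.inr i => M i j = true
    | _, _ => False)

/-- `morphIter A B k` is the matrix `M^k(A,B)`, obtained from the `1 × 1` matrix `[0]`
by `k` iterations of the 2-dimensional morphism replacing `0` by the block `A`
and `1` by the block `B`. -/
def morphIter {m n : ℕ} (A B : Fin m → Fin n → Bool) :
    (k : ℕ) → Fin (m ^ k) → Fin (n ^ k) → Bool
  | 0, _, _ => false
  | k + 1, i, j =>
    have hm : 0 < m := Nat.pos_of_ne_zero (fun h => by
      have := i.isLt; simp [h] at this)
    have hn : 0 < n := Nat.pos_of_ne_zero (fun h => by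
      have := j.isLt; simp [h] at this)
    have hR : i.val / m < m ^ k :=
      (Nat.div_lt_iff_lt_mul hm).2 (by rw [← pow_succ]; exact i.isLt)
    have hC : j.val / n < n ^ k :=
      (Nat.div_lt_iff_lt_mul hn).2 (by rw [← pow_succ]; exact j.isLt)
    if morphIter A B k ⟨i.val / m, hR⟩ ⟨j.val / n, hC⟩ then
      B ⟨i.val % m, Nat.mod_lt _ hm⟩ ⟨j.val % n, Nat.mod_lt _ hn⟩
    else
      A ⟨i.val % m, Nat.mod_lt _ hm⟩ ⟨j.val % n, Nat.mod_lt _ hn⟩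

/-- `Gk A B k` is the split graph `G^k(A,B) = G(M^k(A,B))`. -/
def Gk {m n : ℕ} (A B : Fin m → Fin n → Bool) (k : ℕ) :
    SimpleGraph (Fin (n ^ k) ⊕ Fin (m ^ k)) :=
  splitGraph (morphIter A B k)

/-!
Nested rows make `G(M)` a threshold graph: with `a j` the number of rows having a `1` in
column `j` and `b i` the number of rows containing row `i`, the vertex `n + i` is adjacent
to `j` exactly when `b i ≤ a j`. Such a graph is represented by the concatenation of two
permutations of its vertices: `σ`, listing all vertices by level (at equal level the
independent vertices first), and `σ'`, listing the independent vertices in the reverse of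
their order in `σ` followed by the clique in its order in `σ`. Two vertices alternate in
`σ σ'` iff `σ` and `σ'` order them alike, which happens exactly for the edges.
-/

open List

section WordRepresentation

variable {V : Type*} [DecidableEq V]

def pairRestrict (l : List V) (x y : V) : List V :=
  l.filter (fun z => z == x || z == y)

lemma pairRestrict_comm (l : List V) (x y : V) : pairRestrict l x y = pairRestrict l y x := by
  simp only [pairRestrict, Bool.or_comm]

lemma pairRestrict_append (l₁ l₂ : List V) (x y : V) :
    pairRestrict (l₁ ++ l₂) x y = pairRestrict l₁ x y ++ pairRestrict l₂ x y :=
  filter_append l₁ l₂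

lemma pairRestrict_reverse (l : List V) (x y : V) :
    pairRestrict l.reverse x y = (pairRestrict l x y).reverse :=
  filter_reverse

lemma pairRestrict_filter_of_true {p : V → Bool} (l : List V) {x y : V} (hx : p x) (hy : p y) :
    pairRestrict (l.filter p) x y = pairRestrict l x y := by
  simp only [pairRestrict, filter_filter]
  exact filter_congr fun z _ => by grind

lemma pairRestrict_filter_of_false {p : V → Bool} (l : List V) {x y : V} (hx : p x = false)
    (hy : p y = false) : pairRestrict (l.filter p) x y = [] := by
  simp only [pairRestrict, filter_filter]
  exact filter_eq_nil_iff.mpr fun z _ => by grind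

lemma pairRestrict_filter_of_true_of_false {p : V → Bool} (l : List V) {x y : V} (hx : p x)
    (hy : p y = false) : pairRestrict (l.filter p) x y = pairRestrict l x x := by
  simp only [pairRestrict, filter_filter]
  exact filter_congr fun z _ => by grind

lemma pairRestrict_eq_or {l : List V} (hl : l.Nodup) {x y : V} (hx : x ∈ l) (hy : y ∈ l)
    (hxy : x ≠ y) : pairRestrict l x y = [x, y] ∨ pairRestrict l x y = [y, x] := by
  refine perm_pair.mp ((perm_ext_iff_of_nodup (hl.filter _) ?_).mpr fun z => ?_)
  · simpa using hxy
  · simp only [mem_filter, Bool.or_eq_true, beq_iff_eq, mem_cons, not_mem_nil, or_false]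
    constructor
    · exact And.right
    · rintro (rfl | rfl) <;> simp [hx, hy]

lemma pairRestrict_self {l : List V} (hl : l.Nodup) {x : V} (hx : x ∈ l) :
    pairRestrict l x x = [x] := by
  refine perm_singleton.mp ((perm_ext_iff_of_nodup (hl.filter _) (nodup_singleton x)).mpr
    fun z => ?_)
  simp only [mem_filter, Bool.or_self, beq_iff_eq, mem_singleton]
  exact ⟨And.right, by rintro rfl; exact ⟨hx, rfl⟩⟩

lemma pairRestrict_eq_iff_of_pairwise {r : V → V → Prop} {l : List V} (hr : l.Pairwise r)
    (hl : l.Nodup) {x y : V} (hx : x ∈ l) (hy : y ∈ l) (hxy : x ≠ y)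
    (hasymm : ¬ (r x y ∧ r y x)) : pairRestrict l x y = [x, y] ↔ r x y := by
  have hpair := hr.filter (fun z => z == x || z == y)
  rcases pairRestrict_eq_or hl hx hy hxy with h | h <;>
    rw [pairRestrict] at h ⊢ <;> rw [h] at hpair ⊢ <;> simp at hpair
  · simpa using hpair
  · simpa [hxy.symm] using fun hxy' => hasymm ⟨hxy', hpair⟩

lemma wordRepresents_append {G : SimpleGraph V} {l₁ l₂ : List V} (h₁ : l₁.Nodup)
    (h₂ : l₂.Nodup) (hmem₁ : ∀ v, v ∈ l₁) (hmem₂ : ∀ v, v ∈ l₂)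
    (hadj : ∀ x y, x ≠ y → (G.Adj x y ↔ pairRestrict l₁ x y = pairRestrict l₂ x y)) :
    WordRepresents (l₁ ++ l₂) G := by
  refine ⟨fun v => mem_append_left _ (hmem₁ v), fun x y hxy => ?_⟩
  rw [hadj x y hxy, filter_append]
  change _ ↔ (pairRestrict l₁ x y ++ pairRestrict l₂ x y).IsChain (· ≠ ·)
  rcases pairRestrict_eq_or h₁ (hmem₁ x) (hmem₁ y) hxy with e₁ | e₁ <;>
  rcases pairRestrict_eq_or h₂ (hmem₂ x) (hmem₂ y) hxy with e₂ | e₂ <;>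
  simp [e₁, e₂, hxy, hxy.symm]

end WordRepresentation

section SplitGraph

variable {α β : Type*} [DecidableEq α] [DecidableEq β]

def mirrorIndep (σ : List (α ⊕ β)) : List (α ⊕ β) :=
  (σ.filter Sum.isRight).reverse ++ σ.filter Sum.isLeft

lemma pairRestrict_mirrorIndep_inl_inl (σ : List (α ⊕ β)) (j j' : α) :
    pairRestrict (mirrorIndep σ) (.inl j) (.inl j') = pairRestrict σ (.inl j) (.inl j') := by
  rw [mirrorIndep, pairRestrict_append, pairRestrict_reverse,
    pairRestrict_filter_of_false _ rfl rfl, pairRestrict_filter_of_true _ rfl rfl]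
  rfl

lemma pairRestrict_mirrorIndep_inr_inr (σ : List (α ⊕ β)) (i i' : β) :
    pairRestrict (mirrorIndep σ) (.inr i) (.inr i') =
      (pairRestrict σ (.inr i) (.inr i')).reverse := by
  rw [mirrorIndep, pairRestrict_append, pairRestrict_reverse,
    pairRestrict_filter_of_true _ rfl rfl, pairRestrict_filter_of_false _ rfl rfl, append_nil]

lemma pairRestrict_mirrorIndep_inr_inl {σ : List (α ⊕ β)} (hσ : σ.Nodup) {i : β} {j : α}
    (hi : .inr i ∈ σ) (hj : .inl j ∈ σ) :
    pairRestrict (mirrorIndep σ) (.inr i) (.inl j) = [.inr i, .inl j] := by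
  rw [mirrorIndep, pairRestrict_append, pairRestrict_reverse,
    pairRestrict_filter_of_true_of_false _ rfl rfl, pairRestrict_comm (σ.filter _),
    pairRestrict_filter_of_true_of_false _ rfl rfl, pairRestrict_self hσ hi,
    pairRestrict_self hσ hj]
  rfl

lemma wordRepresents_append_mirrorIndep {G : SimpleGraph (α ⊕ β)} {σ : List (α ⊕ β)}
    (hσ : σ.Nodup) (hmem : ∀ v, v ∈ σ)
    (hclique : ∀ j j', j ≠ j' → G.Adj (.inl j) (.inl j'))
    (hindep : ∀ i i', ¬ G.Adj (.inr i) (.inr i'))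
    (hcross : ∀ j i,
      G.Adj (.inl j) (.inr i) ↔ pairRestrict σ (.inr i) (.inl j) = [.inr i, .inl j]) :
    WordRepresents (σ ++ mirrorIndep σ) G := by
  have hmem' : ∀ v, v ∈ mirrorIndep σ := by
    rintro (_ | _) <;> simp [mirrorIndep, hmem]
  have hnodup : (mirrorIndep σ).Nodup := by
    refine nodup_append.mpr ⟨nodup_reverse.mpr (hσ.filter _), hσ.filter _, ?_⟩
    rintro (_ | _) hx _ hy rfl <;> simp_all
  have hcross' : ∀ j i, G.Adj (.inl j) (.inr i) ↔
      pairRestrict σ (.inr i) (.inl j) = pairRestrict (mirrorIndep σ) (.inr i) (.inl j) := by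
    intro j i
    rw [pairRestrict_mirrorIndep_inr_inl hσ (hmem _) (hmem _), hcross]
  refine wordRepresents_append hσ hnodup hmem hmem' ?_
  rintro (j | i) (j' | i') hne
  · simp only [hclique j j' (by rintro rfl; exact hne rfl), pairRestrict_mirrorIndep_inl_inl]
  · rw [hcross', pairRestrict_comm σ, pairRestrict_comm (mirrorIndep σ)]
  · rw [G.adj_comm, hcross']
  · have hne' : (.inr i : α ⊕ β) ≠ .inr i' := hne
    rw [pairRestrict_mirrorIndep_inr_inr, iff_false_intro (hindep i i')]
    rcases pairRestrict_eq_or hσ (hmem _) (hmem _) hne' with h | h <;> simp [h, hne']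

end SplitGraph

section Threshold

variable {α β : Type*} [Fintype α] [Fintype β] [DecidableEq α] [DecidableEq β]

theorem wordRepresentable_of_threshold {G : SimpleGraph (α ⊕ β)} (a : α → ℕ) (b : β → ℕ)
    (hclique : ∀ j j', j ≠ j' → G.Adj (.inl j) (.inl j'))
    (hindep : ∀ i i', ¬ G.Adj (.inr i) (.inr i'))
    (hcross : ∀ j i, G.Adj (.inl j) (.inr i) ↔ b i ≤ a j) :
    WordRepresentable G := by
  -- odd levels for the clique, so that ties between the two sides go to the independent vertex
  let level : α ⊕ β → ℕ := Sum.elim (fun j => 2 * a j + 1) (fun i => 2 * b i)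
  let σ := (Finset.univ : Finset (α ⊕ β)).toList.mergeSort (fun u v => level u ≤ level v)
  have hperm : σ.Perm Finset.univ.toList := mergeSort_perm _ _
  have hσ : σ.Nodup := hperm.nodup_iff.mpr (Finset.nodup_toList _)
  have hmem : ∀ v, v ∈ σ := fun v => hperm.mem_iff.mpr (by simp)
  have hsorted : σ.Pairwise (fun u v => level u ≤ level v) := by
    simpa using pairwise_mergeSort (le := fun u v => decide (level u ≤ level v))
      (fun _ _ _ h₁ h₂ => by simp only [decide_eq_true_eq] at *; omega)
      (fun _ _ => by simp only [Bool.or_eq_true, decide_eq_true_eq]; omega) _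
  refine ⟨_, wordRepresents_append_mirrorIndep hσ hmem hclique hindep fun j i => ?_⟩
  rw [hcross, pairRestrict_eq_iff_of_pairwise hsorted hσ (hmem _) (hmem _) Sum.inr_ne_inl] <;>
    simp only [level, Sum.elim_inl, Sum.elim_inr] <;> omega

end Threshold

open Finset Classical in
theorem mem_iff_card_le_of_chain {ι γ : Type*} [Fintype ι] (S : ι → Set γ)
    (hS : ∀ i i', S i ⊆ S i' ∨ S i' ⊆ S i) (i : ι) (j : γ) :
    j ∈ S i ↔ #{i' | S i ⊆ S i'} ≤ #{i' | j ∈ S i'} := by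
  refine ⟨fun hj => card_le_card fun i' => by simpa using fun h => h hj, fun hle => ?_⟩
  by_contra hj
  have hsub : univ.filter (j ∈ S ·) ⊆ univ.filter (S i ⊆ S ·) := fun i' => by
    simp only [Finset.mem_filter, mem_univ, true_and]
    exact fun hj' => (hS i i').resolve_right fun h => hj (h hj')
  have hss : univ.filter (j ∈ S ·) ⊂ univ.filter (S i ⊆ S ·) :=
    (ssubset_iff_of_subset hsub).mpr ⟨i, by simp, by simpa using hj⟩
  exact (card_lt_card hss).not_ge hle

theorem wordRepresentable_splitGraph_of_rows_chain {m n : ℕ} (M : Fin m → Fin n → Bool)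
    (h : ∀ i i', (∀ j, M i j = true → M i' j = true) ∨ (∀ j, M i' j = true → M i j = true)) :
    WordRepresentable (splitGraph M) := by
  refine wordRepresentable_of_threshold _ _ (fun j j' hne => ?_) (fun i i' => ?_)
    fun j i => Iff.trans ?_ (mem_iff_card_le_of_chain (fun i => {j | M i j = true}) h i j)
  · simpa [splitGraph] using hne
  · simp [splitGraph]
  · simp [splitGraph]

theorem stmt14_general {m n : ℕ} (A B : Fin m → Fin n → Bool) (k : ℕ)
    (h : ∀ i i' : Fin (m ^ k),
      (∀ j, morphIter A B k i j = true → morphIter A B k i' j = true) ∨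
      (∀ j, morphIter A B k i' j = true → morphIter A B k i j = true)) :
    WordRepresentable (Gk A B k) :=
  wordRepresentable_splitGraph_of_rows_chain (morphIter A B k) h

theorem stmt14 {m n : ℕ} (A B : Fin m → Fin n → Bool) (k : ℕ) (hk : 1 < k)
    (h : ∀ i i' : Fin (m ^ k),
      (∀ j, morphIter A B k i j = true → morphIter A B k i' j = true) ∨
      (∀ j, morphIter A B k i' j = true → morphIter A B k i j = true)) :
    WordRepresentable (Gk A B k) :=
  stmt14_general A B k h
end

section
/- Let A and B be 2×2 binary matrices. If for all binary strings x and y of the same length with x ≤ y, the four strings u(x), l(x), u(y), l(y) are pairwise comparable under ≤, then G^k(A,B) is word-representable for every integer k ≥ 0. -/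
/-- The map `u` on binary strings: letterwise, `u(0)` is the top row of `A`
and `u(1)` is the top row of `B`, extended by concatenation. -/
def uMap (A B : Fin 2 → Fin 2 → Bool) : List Bool → List Bool :=
  fun v => v.flatMap (fun x => if x = true then [B 0 0, B 0 1] else [A 0 0, A 0 1])

/-- The map `l` on binary strings: letterwise, `l(0)` is the bottom row of `A`
and `l(1)` is the bottom row of `B`, extended by concatenation. -/
def lMap (A B : Fin 2 → Fin 2 → Bool) : List Bool → List Bool :=
  fun v => v.flatMap (fun x => if x = true then [B 1 0, B 1 1] else [A 1 0, A 1 1])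

/-- The order `x ≤ y` on binary strings of the same length:
`x i = 1` implies `y i = 1` for every position `i`. -/
def strLe (x y : List Bool) : Prop :=
  List.Forall₂ (fun a b => a = true → b = true) x y

/-!
The rows of `M^k(A,B)` form a chain for `≤`: row `i` of `M^(k+1)` is `u` or `l` applied to row
`⌊i/2⌋` of `M^k`, so the hypothesis propagates comparability of rows from `k` to `k + 1`.
A split graph whose independent vertices have nested neighbourhoods is a threshold graph:
with `d v` the degree of `v` and `θ c` the least degree of a neighbour of `c`, the vertices
`c` and `v` are adjacent iff `θ c ≤ d v`. Such a graph is represented by the concatenation of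
two permutations of its vertices, since two letters alternate in `p ++ q` iff `p` and `q` order
them alike. Sort by `(θ c, 0, c)` and `(d v, 1, v)` lexicographically for `p`; for `q`, put the
clique first, in the same order, and then the independent set in the reverse order.
-/

theorem List.exists_pairwise_lt_of_injective {V α : Type*} [Fintype V] [LinearOrder α]
    {f : V → α} (hf : Function.Injective f) :
    ∃ l : List V, (∀ v, v ∈ l) ∧ l.Pairwise (fun a b => f a < f b) := by
  classical
  let l := Finset.univ.toList.mergeSort (fun a b => decide (f a ≤ f b))
  have hperm : l.Perm Finset.univ.toList := List.mergeSort_perm _ _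
  have hle : l.Pairwise (fun a b => f a ≤ f b) := by
    simpa using List.pairwise_mergeSort (le := fun a b => decide (f a ≤ f b))
      (by simpa using fun _ _ _ => le_trans) (by simpa using fun _ _ => le_total _ _) _
  refine ⟨l, fun v => hperm.mem_iff.2 (by simp), ?_⟩
  exact (hle.and (hperm.nodup_iff.2 (Finset.nodup_toList _))).imp fun h =>
    lt_of_le_of_ne h.1 (hf.ne h.2)

theorem List.filter_eq_pair_of_pairwise_lt {V α : Type*} [DecidableEq V] [LinearOrder α]
    {f : V → α} (hf : Function.Injective f) {l : List V}
    (hl : l.Pairwise (fun a b => f a < f b)) {x y : V} (hx : x ∈ l) (hy : y ∈ l)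
    (hxy : x ≠ y) :
    l.filter (fun z => z == x || z == y) = if f x < f y then [x, y] else [y, x] := by
  have : Std.Irrefl fun a b => f a < f b := ⟨fun a => lt_irrefl (f a)⟩
  have : Std.Antisymm fun a b => f a < f b :=
    ⟨fun _ _ h h' => absurd (h.trans h') (lt_irrefl _)⟩
  refine (hl.filter _).eq_of_mem_iff ?_ fun z => ?_
  · split_ifs with h
    · simpa using h
    · simpa using lt_of_le_of_ne (not_lt.1 h) (hf.ne hxy.symm)
  · split_ifs <;> simp only [List.mem_filter, Bool.or_eq_true, beq_iff_eq, List.mem_cons,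
      List.not_mem_nil, or_false] <;> grind

theorem wordRepresentable_of_two_orders {V α β : Type*} [DecidableEq V] [Fintype V]
    [LinearOrder α] [LinearOrder β] {G : SimpleGraph V} {f : V → α} {g : V → β}
    (hf : Function.Injective f) (hg : Function.Injective g)
    (hG : ∀ x y, x ≠ y → (G.Adj x y ↔ (f x < f y ↔ g x < g y))) :
    WordRepresentable G := by
  obtain ⟨lf, hmemf, hsortf⟩ := List.exists_pairwise_lt_of_injective hf
  obtain ⟨lg, hmemg, hsortg⟩ := List.exists_pairwise_lt_of_injective hg
  refine ⟨lf ++ lg, fun v => List.mem_append_left _ (hmemf v), fun x y hxy => ?_⟩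
  rw [hG x y hxy, List.filter_append,
    List.filter_eq_pair_of_pairwise_lt hf hsortf (hmemf x) (hmemf y) hxy,
    List.filter_eq_pair_of_pairwise_lt hg hsortg (hmemg x) (hmemg y) hxy]
  change _ ↔ List.IsChain _ _
  split_ifs <;> simp [*, List.isChain_cons_cons, Ne.symm]

theorem exists_threshold_of_rows_chain {ι κ : Type*} [Fintype κ] (M : ι → κ → Bool)
    (hM : ∀ v v', M v ≤ M v' ∨ M v' ≤ M v) :
    ∃ (d : ι → ℕ) (θ : κ → ℕ), ∀ v c, M v c = true ↔ θ c ≤ d v := by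
  classical
  let support v := Finset.univ.filter fun c => M v c = true
  let d v := (support v).card
  have hle_of_d_le : ∀ v v', d v ≤ d v' → M v ≤ M v' := by
    intro v v' hvv'
    rcases hM v v' with h | h
    · exact h
    · have hsub : support v' ⊆ support v := fun c => by
        simpa [support] using Bool.le_iff_imp.1 (h c)
      have heq := Finset.eq_of_subset_of_card_le hsub hvv'
      refine fun c => Bool.le_iff_imp.2 fun hc => ?_
      have : c ∈ support v' := heq ▸ (by simpa [support] using hc)
      simpa [support] using this
  -- `card κ + 1` exceeds every `d v`, so it serves as `θ c` for a column `c` of zeros.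
  let θ c := sInf (d '' {v | M v c = true} ∪ {Fintype.card κ + 1})
  refine ⟨d, θ, fun v c => ⟨fun h => Nat.sInf_le (.inl ⟨v, h, rfl⟩), fun h => ?_⟩⟩
  rcases Nat.sInf_mem (s := d '' {v | M v c = true} ∪ {Fintype.card κ + 1})
      ⟨_, .inr rfl⟩ with ⟨v₀, hv₀, hθ⟩ | hθ
  · exact Bool.le_iff_imp.1 (hle_of_d_le v₀ v (hθ ▸ h) c) hv₀
  · have : θ c = Fintype.card κ + 1 := hθ
    have : d v ≤ Fintype.card κ := Finset.card_le_univ _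
    omega

theorem splitGraph_wordRepresentable_of_threshold {m n : ℕ} (M : Fin m → Fin n → Bool)
    (d : Fin m → ℕ) (θ : Fin n → ℕ) (h : ∀ v c, M v c = true ↔ θ c ≤ d v) :
    WordRepresentable (splitGraph M) := by
  let f : Fin n ⊕ Fin m → ℕ ×ₗ ℕ ×ₗ ℕ :=
    Sum.elim (fun c => toLex (θ c, toLex (0, c.val))) (fun v => toLex (d v, toLex (1, v.val)))
  let g : Fin n ⊕ Fin m → ℕ ×ₗ ℤ ×ₗ ℤ :=
    Sum.elim (fun c => toLex (0, toLex ((θ c : ℤ), (c.val : ℤ))))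
      (fun v => toLex (1, toLex (-(d v : ℤ), -(v.val : ℤ))))
  have hf : Function.Injective f := by
    rintro (c | v) (c' | v') hcc' <;> simp [f, Fin.ext_iff] at hcc' ⊢ <;> omega
  have hg : Function.Injective g := by
    rintro (c | v) (c' | v') hcc' <;> simp [g, Fin.ext_iff] at hcc' ⊢ <;> omega
  refine wordRepresentable_of_two_orders hf hg ?_
  rintro (c | v) (c' | v') hne <;>
    simp [splitGraph, f, g, h, Prod.Lex.toLex_lt_toLex] at hne ⊢ <;> omega

theorem splitGraph_wordRepresentable_of_rows_chain {m n : ℕ} (M : Fin m → Fin n → Bool)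
    (hM : ∀ v v', M v ≤ M v' ∨ M v' ≤ M v) :
    WordRepresentable (splitGraph M) :=
  let ⟨d, θ, h⟩ := exists_threshold_of_rows_chain M hM
  splitGraph_wordRepresentable_of_threshold M d θ h

theorem strLe_ofFn_iff {N : ℕ} (x y : Fin N → Bool) :
    strLe (List.ofFn x) (List.ofFn y) ↔ x ≤ y := by
  simp [strLe, List.forall₂_iff_get, Pi.le_def, Bool.le_iff_imp, Fin.forall_iff]

section morphIter

variable {m n : ℕ} (A B : Fin m → Fin n → Bool) (k : ℕ)

theorem morphIter_succ (i : Fin (m ^ (k + 1))) (j : Fin (n ^ (k + 1))) :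
    morphIter A B (k + 1) i j =
      (if morphIter A B k (Fin.divNat (m := m ^ k) i) (Fin.divNat (m := n ^ k) j) then B else A)
        (Fin.modNat (m := m ^ k) i) (Fin.modNat (m := n ^ k) j) := by
  rw [morphIter.eq_2, ite_apply, ite_apply]
  rfl

theorem ofFn_morphIter_succ (i : Fin (m ^ (k + 1))) :
    List.ofFn (morphIter A B (k + 1) i) =
      (List.ofFn (morphIter A B k (Fin.divNat (m := m ^ k) i))).flatMap
        fun b => List.ofFn ((if b then B else A) (Fin.modNat (m := m ^ k) i)) := by
  refine (List.ofFn_mul (m := n ^ k) (n := n) (morphIter A B (k + 1) i)).trans ?_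
  rw [List.flatMap_def, List.map_ofFn]
  congr 1
  refine List.ofFn_inj.2 (funext fun a => List.ofFn_inj.2 (funext fun r => ?_))
  refine (morphIter_succ A B k i _).trans ?_
  have hdiv : ∀ h, Fin.divNat (m := n ^ k) (n := n) ⟨a * n + r, h⟩ = a := fun _ =>
    Fin.ext (by simp [Fin.divNat, Nat.add_comm _ (r : ℕ), Nat.add_mul_div_right _ _ r.pos,
      Nat.div_eq_of_lt r.isLt])
  have hmod : ∀ h, Fin.modNat (m := n ^ k) (n := n) ⟨a * n + r, h⟩ = r := fun _ =>
    Fin.ext (by simp [Fin.modNat, Nat.mod_eq_of_lt r.isLt])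
  simp only [hdiv, hmod]

end morphIter

section TwoByTwo

variable (A B : Fin 2 → Fin 2 → Bool)

theorem uMap_eq_flatMap : uMap A B = List.flatMap fun b => List.ofFn ((if b then B else A) 0) :=
  funext fun x => congrArg x.flatMap (funext fun b => by cases b <;> rfl)

theorem lMap_eq_flatMap : lMap A B = List.flatMap fun b => List.ofFn ((if b then B else A) 1) :=
  funext fun x => congrArg x.flatMap (funext fun b => by cases b <;> rfl)

theorem ofFn_morphIter_succ_mem (k : ℕ) (i : Fin (2 ^ (k + 1))) :
    List.ofFn (morphIter A B (k + 1) i) ∈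
      [uMap A B (List.ofFn (morphIter A B k (Fin.divNat (m := 2 ^ k) i))),
        lMap A B (List.ofFn (morphIter A B k (Fin.divNat (m := 2 ^ k) i)))] := by
  rw [ofFn_morphIter_succ, uMap_eq_flatMap, lMap_eq_flatMap]
  generalize Fin.modNat (m := 2 ^ k) i = r
  fin_cases r <;> simp

theorem morphIter_rows_chain
    (h : ∀ x y : List Bool, strLe x y →
      ∀ p ∈ [uMap A B x, lMap A B x, uMap A B y, lMap A B y],
      ∀ q ∈ [uMap A B x, lMap A B x, uMap A B y, lMap A B y],
        strLe p q ∨ strLe q p) (k : ℕ) (i i' : Fin (2 ^ k)) :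
    morphIter A B k i ≤ morphIter A B k i' ∨ morphIter A B k i' ≤ morphIter A B k i := by
  induction k with
  | zero => exact .inl fun j => by simp [morphIter]
  | succ k ih =>
    suffices H : ∀ i i' : Fin (2 ^ (k + 1)),
        morphIter A B k (Fin.divNat (m := 2 ^ k) i) ≤
          morphIter A B k (Fin.divNat (m := 2 ^ k) i') →
        morphIter A B (k + 1) i ≤ morphIter A B (k + 1) i' ∨
          morphIter A B (k + 1) i' ≤ morphIter A B (k + 1) i by
      rcases ih (Fin.divNat (m := 2 ^ k) i) (Fin.divNat (m := 2 ^ k) i') with hle | hle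
      · exact H i i' hle
      · exact (H i' i hle).symm
    intro i i' hle
    have hi := ofFn_morphIter_succ_mem A B k i
    have hi' := ofFn_morphIter_succ_mem A B k i'
    simp only [List.mem_cons, List.not_mem_nil, or_false] at hi hi'
    simp only [← strLe_ofFn_iff]
    exact h _ _ ((strLe_ofFn_iff _ _).2 hle) _ (by simp only [List.mem_cons]; tauto) _
      (by simp only [List.mem_cons]; tauto)

end TwoByTwo

theorem stmt15 (A B : Fin 2 → Fin 2 → Bool)
    (h : ∀ x y : List Bool, strLe x y →
      ∀ p ∈ [uMap A B x, lMap A B x, uMap A B y, lMap A B y],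
      ∀ q ∈ [uMap A B x, lMap A B x, uMap A B y, lMap A B y],
        strLe p q ∨ strLe q p) :
    ∀ k : ℕ, WordRepresentable (Gk A B k) := fun k =>
  splitGraph_wordRepresentable_of_rows_chain _ (morphIter_rows_chain A B h k)
end

section
/- Let A and B be 2×2 binary matrices. If the four binary strings u(100), l(100), u(101), l(101) are pairwise comparable under ≤, then G^k(A,B) is word-representable for every integer k ≥ 0. -/
/-!
The rows of `M^k(A,B)` are totally ordered by inclusion. Row `(p, s)` of `M^(k+1)` is the
concatenation of rows `s` of the blocks selected by row `p` of `M^k`, and the comparability of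
`u(100), l(100), u(101), l(101)` implies that for any two block rows `s, s'`, either row `s`
of `X` lies below row `s'` of `Y` whenever `X ≤ Y` in the order `A < B`, or the reverse holds.
So the chain property passes from `M^k` to `M^(k+1)`.

A split graph whose independent vertices have nested neighbourhoods is a threshold graph: if
`w j` counts the rows meeting column `j`, then row `i` is adjacent to `j` iff `t i ≤ w j`, where
`t i` is the least `w` over the neighbours of `i`. It is represented by the concatenation of two
permutations: in the first, all vertices are sorted by `w`/`t` (rows first on ties); the
second lists the rows in the reverse of that order, followed by the columns in that order. Two
letters alternate iff they occur in the same order in both permutations.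
-/

section Morphism

variable {m n : ℕ} (A B : Fin m → Fin n → Bool)

def block (b : Bool) : Fin m → Fin n → Bool := if b then B else A

lemma morphIter_succ_apply (k : ℕ) (i : Fin (m ^ k * m)) (j : Fin (n ^ k * n)) :
    morphIter A B (k + 1) i j =
      block A B (morphIter A B k i.divNat j.divNat) i.modNat j.modNat := by
  rw [block, ite_apply, ite_apply]
  rfl

lemma morphIter_succ_row_le {R : Bool → Bool → Prop} {k : ℕ} {i i' : Fin (m ^ k * m)}
    (hR : ∀ j, R (morphIter A B k i.divNat j) (morphIter A B k i'.divNat j))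
    (hblock : ∀ b b', R b b' → block A B b i.modNat ≤ block A B b' i'.modNat) :
    morphIter A B (k + 1) i ≤ morphIter A B (k + 1) i' := fun j => by
  rw [morphIter_succ_apply A B k i j, morphIter_succ_apply A B k i' j]
  exact hblock _ _ (hR _) _

def BlockRowsComparable (s s' : Fin m) : Prop :=
  (∀ b b' : Bool, b ≤ b' → block A B b s ≤ block A B b' s') ∨
    (∀ b b' : Bool, b ≤ b' → block A B b' s' ≤ block A B b s)

theorem morphIter_rows_total (hAB : ∀ s s', BlockRowsComparable A B s s') :
    ∀ k (i i' : Fin (m ^ k)), morphIter A B k i ≤ morphIter A B k i' ∨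
      morphIter A B k i' ≤ morphIter A B k i
  | 0, _, _ => Or.inl fun _ => le_rfl
  | k + 1, i, i' => by
    wlog hp : morphIter A B k i.divNat ≤ morphIter A B k i'.divNat generalizing i i'
    · exact (this i' i ((morphIter_rows_total hAB k _ _).resolve_left hp)).symm
    rcases hAB i.modNat i'.modNat with hs | hs
    · exact Or.inl (morphIter_succ_row_le A B hp hs)
    · exact Or.inr (morphIter_succ_row_le A B (R := (· ≥ ·)) hp fun b b' h => hs b' b h)

end Morphism

section Keys

variable {V β : Type*} [LinearOrder β]

noncomputable def keySort [Fintype V] (f : V → β) : List V :=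
  Finset.univ.toList.mergeSort fun a b => f a ≤ f b

lemma mem_keySort [Fintype V] (f : V → β) (v : V) : v ∈ keySort f := by
  simp [keySort]

lemma pairwise_keySort [Fintype V] {f : V → β} (hf : f.Injective) :
    (keySort f).Pairwise fun a b => f a < f b := by
  have hle : (keySort f).Pairwise fun a b => f a ≤ f b := by
    unfold keySort
    simpa using List.pairwise_mergeSort (le := fun a b => decide (f a ≤ f b))
      (fun a b c hab hbc => by simpa using le_trans (by simpa using hab) (by simpa using hbc))
      (fun a b => by simpa using le_total (f a) (f b)) Finset.univ.toList
  have hnodup : (keySort f).Nodup :=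
    (List.mergeSort_perm _ _).nodup_iff.2 (Finset.nodup_toList _)
  exact (hle.and hnodup).imp fun h => lt_of_le_of_ne h.1 (hf.ne h.2)

lemma filter_eq_pair_of_pairwise [DecidableEq V] {f : V → β} {l : List V}
    (hl : l.Pairwise fun a b => f a < f b) {x y : V} (hx : x ∈ l) (hy : y ∈ l)
    (hxy : f x < f y) :
    l.filter (fun z => z == x || z == y) = [x, y] := by
  have : Std.Irrefl fun a b => f a < f b := ⟨fun a => lt_irrefl (f a)⟩
  refine (hl.sublist List.filter_sublist).eq_of_mem_iff (by simpa using hxy) fun z => ?_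
  simp only [List.mem_filter, Bool.or_eq_true, beq_iff_eq, List.mem_cons, List.not_mem_nil,
    or_false]
  constructor
  · exact fun h => h.2
  · rintro (rfl | rfl) <;> simp_all

lemma filter_keySort_pair [Fintype V] [DecidableEq V] {f : V → β} (hf : f.Injective) {x y : V}
    (hxy : x ≠ y) :
    (keySort f).filter (fun z => z == x || z == y) = if f x < f y then [x, y] else [y, x] := by
  split_ifs with h
  · exact filter_eq_pair_of_pairwise (pairwise_keySort hf) (mem_keySort f x) (mem_keySort f y) h
  · rw [← filter_eq_pair_of_pairwise (pairwise_keySort hf) (mem_keySort f y) (mem_keySort f x)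
      ((not_lt.1 h).lt_of_ne (hf.ne hxy.symm))]
    simp only [Bool.or_comm]

lemma isChain_ne_pair_append_pair_iff {x y : V} (hxy : x ≠ y) (p q : Prop) [Decidable p]
    [Decidable q] :
    ((if p then [x, y] else [y, x]) ++ (if q then [x, y] else [y, x])).IsChain (· ≠ ·) ↔
      (p ↔ q) := by
  by_cases p <;> by_cases q <;> simp [*, hxy.symm]

theorem wordRepresentable_of_keys [Fintype V] [DecidableEq V] {γ : Type*} [LinearOrder γ]
    {G : SimpleGraph V} (f : V → β) (g : V → γ) (hf : f.Injective) (hg : g.Injective)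
    (hG : ∀ x y, x ≠ y → (G.Adj x y ↔ (f x < f y ↔ g x < g y))) :
    WordRepresentable G := by
  refine ⟨keySort f ++ keySort g, fun v => List.mem_append_left _ (mem_keySort f v),
    fun x y hxy => ?_⟩
  rw [List.filter_append, filter_keySort_pair hf hxy, filter_keySort_pair hg hxy]
  exact (hG x y hxy).trans (isChain_ne_pair_append_pair_iff hxy _ _).symm

end Keys

section SplitGraph

variable {m n : ℕ} (M : Fin m → Fin n → Bool)

theorem splitGraph_wordRepresentable_of_threshold_s16 {α : Type*} [LinearOrder α] (w : Fin n → α)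
    (t : Fin m → α) (hM : ∀ i j, M i j = true ↔ t i ≤ w j) :
    WordRepresentable (splitGraph M) := by
  let f : Fin n ⊕ Fin m → α ×ₗ Bool ×ₗ ℕ
    | .inl j => toLex (w j, toLex (true, j.val))
    | .inr i => toLex (t i, toLex (false, i.val))
  have hf : f.Injective := by
    rintro (j | i) (j' | i') h <;> simp_all [f, Fin.val_inj]
  let g : Fin n ⊕ Fin m → (α ×ₗ Bool ×ₗ ℕ)ᵒᵈ ⊕ₗ (α ×ₗ Bool ×ₗ ℕ)
    | .inl j => toLex (.inr (f (.inl j)))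
    | .inr i => toLex (.inl (OrderDual.toDual (f (.inr i))))
  refine wordRepresentable_of_keys f g hf ?_ ?_
  · refine fun x y h => hf ?_
    rcases x with j | i <;> rcases y with j' | i' <;> simp_all [g]
  rintro (j | i) (j' | i') hne
  · simpa [splitGraph, g] using hne
  · simp [splitGraph, f, g, Prod.Lex.toLex_lt_toLex, hM]
  · simp [splitGraph, f, g, Prod.Lex.toLex_lt_toLex, hM, le_iff_lt_or_eq]
  · simp only [splitGraph, g, SimpleGraph.fromRel_adj, Sum.Lex.toLex_lt_toLex, Sum.lex_inl_inl,
      OrderDual.toDual_lt_toDual, and_false, or_self, false_iff]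
    rcases (hf.ne hne).lt_or_gt with h | h
    · exact fun hiff => lt_asymm h (hiff.1 h)
    · exact fun hiff => lt_asymm h (hiff.2 h)

end SplitGraph

section Nested

variable {m n : ℕ}

def colWeight (M : Fin m → Fin n → Bool) (j : Fin n) : ℕ :=
  (Finset.univ.filter fun i => M i j).card

variable {M : Fin m → Fin n → Bool}

lemma apply_of_colWeight_le (hM : ∀ i i', M i ≤ M i' ∨ M i' ≤ M i) {i : Fin m}
    {j j' : Fin n} (hij : M i j = true) (hw : colWeight M j ≤ colWeight M j') :
    M i j' = true := by
  by_contra hij'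
  have hsub : (Finset.univ.filter fun i => M i j') ⊂ Finset.univ.filter fun i => M i j := by
    refine Finset.ssubset_iff_of_subset (fun i' hi' => ?_) |>.2 ⟨i, by simp [hij, hij']⟩
    simp only [Finset.mem_filter, Finset.mem_univ, true_and] at hi' ⊢
    rcases hM i i' with h | h
    · exact h j hij
    · exact absurd (h j' hi') hij'
  exact (Finset.card_lt_card hsub).not_ge hw

theorem splitGraph_wordRepresentable_of_rows_total (hM : ∀ i i', M i ≤ M i' ∨ M i' ≤ M i) :
    WordRepresentable (splitGraph M) := by
  refine splitGraph_wordRepresentable_of_threshold_s16 M (fun j => (colWeight M j : WithTop ℕ))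
    (fun i => (Finset.univ.filter fun j => M i j).inf fun j => (colWeight M j : WithTop ℕ))
    fun i j => ⟨fun h => Finset.inf_le (by simpa using h), fun h => ?_⟩
  obtain ⟨j₀, hj₀, hw⟩ := (Finset.inf_le_iff (WithTop.coe_lt_top _)).1 h
  exact apply_of_colWeight_le hM (by simpa using hj₀) (by exact_mod_cast hw)

end Nested

section TwoByTwo

variable (A B : Fin 2 → Fin 2 → Bool)

def rowString (s : Fin 2) (v : List Bool) : List Bool :=
  v.flatMap fun b => [block A B b s 0, block A B b s 1]

lemma uMap_eq_rowString : uMap A B = rowString A B 0 := by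
  funext v
  simp only [uMap, rowString]
  congr 1
  funext b
  cases b <;> rfl

lemma lMap_eq_rowString : lMap A B = rowString A B 1 := by
  funext v
  simp only [lMap, rowString]
  congr 1
  funext b
  cases b <;> rfl

lemma rowString_mem (s : Fin 2) (v : List Bool) :
    rowString A B s v ∈ [uMap A B v, lMap A B v] := by
  fin_cases s <;> simp [uMap_eq_rowString, lMap_eq_rowString]

lemma strLe_rowString_iff (s s' : Fin 2) (v v' : List Bool) :
    strLe (rowString A B s v) (rowString A B s' v') ↔
      List.Forall₂ (fun b b' => block A B b s ≤ block A B b' s') v v' := by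
  induction v generalizing v' with
  | nil => cases v' <;> simp [rowString, strLe]
  | cons b v ih =>
    cases v' with
    | nil => simp [rowString, strLe]
    | cons b' v' =>
      simp only [strLe, rowString] at ih ⊢
      simp [List.forall₂_cons, ih, Pi.le_def, Fin.forall_fin_two, Bool.le_iff_imp, and_assoc]

lemma blockRowsComparable_of_strLe {s s' : Fin 2}
    (h : strLe (rowString A B s [true, false, false]) (rowString A B s' [true, false, true]) ∨
      strLe (rowString A B s' [true, false, true]) (rowString A B s [true, false, false])) :
    BlockRowsComparable A B s s' := by
  simp only [strLe_rowString_iff, List.forall₂_cons, List.Forall₂.nil, and_true] at h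
  refine h.imp ?_ ?_ <;> rintro ⟨htt, hff, hft⟩ (_ | _) (_ | _) hb <;>
    first | assumption | exact absurd hb (by decide)

end TwoByTwo

theorem stmt16 (A B : Fin 2 → Fin 2 → Bool)
    (h : ∀ p ∈ [uMap A B [true, false, false], lMap A B [true, false, false],
                uMap A B [true, false, true], lMap A B [true, false, true]],
         ∀ q ∈ [uMap A B [true, false, false], lMap A B [true, false, false],
                uMap A B [true, false, true], lMap A B [true, false, true]],
          strLe p q ∨ strLe q p) :
    ∀ k : ℕ, WordRepresentable (Gk A B k) := by
  have hAB (s s' : Fin 2) : BlockRowsComparable A B s s' :=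
    blockRowsComparable_of_strLe A B <|
      h _ (List.mem_append_left _ (rowString_mem A B s _)) _
        (List.mem_append_right [uMap A B _, lMap A B _] (rowString_mem A B s' _))
  intro k
  exact splitGraph_wordRepresentable_of_rows_total (morphIter_rows_total A B hAB k)
end

section
/- For A = [[1,0],[0,0]] and B = [[1,0],[0,1]], the graph G^k(A,B) is word-representable for every integer k ≥ 0. -/
/-!
The entry `(i, j)` of `M^k(A,B)` is `1` exactly when `i` and `j` end in the same number `t < k`
of binary `1`s. So `G^k(A,B)` is the split graph of a matrix of the form `M i j = 1 ↔ r i = c j`,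
where `r`, `c` assign levels to rows and columns. Such a split graph is represented by the word
that lists, level by level, the rows `Y` of that level, then its columns, then `Y` reversed:
every column letter occurs once, every row letter twice, and the two occurrences of a row letter
enclose exactly the columns of its own level.
-/

open List

theorem List.flatMap_eq_of_forall_ne_eq_nil {α β : Type*} {f : α → List β} {a : α} :
    ∀ {l : List α}, l.Nodup → a ∈ l → (∀ b ∈ l, b ≠ a → f b = []) → l.flatMap f = f a
  | [], _, ha, _ => absurd ha not_mem_nil
  | b :: l, hnd, ha, hf => by
    rw [flatMap_cons]
    rcases eq_or_ne b a with rfl | hba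
    · rw [flatMap_eq_nil_iff.2 fun c hc => hf c (mem_cons_of_mem _ hc) ?_, append_nil]
      rintro rfl
      exact (nodup_cons.1 hnd).1 hc
    · rw [hf b mem_cons_self hba, nil_append]
      exact flatMap_eq_of_forall_ne_eq_nil (nodup_cons.1 hnd).2
        ((mem_cons.1 ha).resolve_left hba.symm) fun c hc => hf c (mem_cons_of_mem _ hc)

theorem List.filter_eq_singleton_of_nodup {α : Type*} [DecidableEq α] {l : List α} {q : α → Bool}
    {a : α} (hl : l.Nodup) (ha : a ∈ l) (hq : ∀ b ∈ l, q b ↔ b = a) : l.filter q = [a] := by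
  rw [filter_congr fun b hb => Bool.eq_iff_iff.2 ((hq b hb).trans decide_eq_true_iff.symm),
    filter_eq, count_eq_one_of_mem hl ha, replicate_one]

theorem List.not_isChain_ne_of_infix {α : Type*} {l : List α} {z : α} (h : [z, z] <:+: l) :
    ¬ l.IsChain (· ≠ ·) :=
  fun hl => by simpa using hl.infix h

theorem List.exists_pair_infix_append_reverse {α : Type*} {l : List α} (hl : l ≠ []) :
    ∃ z, [z, z] <:+: l ++ l.reverse := by
  obtain ⟨l', z, rfl⟩ := eq_nil_or_concat l |>.resolve_left hl
  exact ⟨z, l', l'.reverse, by simp⟩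

section SplitGraph

variable {m n : ℕ} {M : Fin m → Fin n → Bool}

@[simp]
theorem splitGraph_adj_inl_inl {j j' : Fin n} : (splitGraph M).Adj (.inl j) (.inl j') ↔ j ≠ j' := by
  simp [splitGraph]

@[simp]
theorem splitGraph_adj_inl_inr {j : Fin n} {i : Fin m} :
    (splitGraph M).Adj (.inl j) (.inr i) ↔ M i j = true := by
  simp [splitGraph]

@[simp]
theorem splitGraph_not_adj_inr_inr {i i' : Fin m} : ¬ (splitGraph M).Adj (.inr i) (.inr i') := by
  simp [splitGraph]

end SplitGraph

namespace Levels

variable {m n : ℕ} (r : Fin m → ℕ) (c : Fin n → ℕ)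

def level : Fin n ⊕ Fin m → ℕ := Sum.elim c r

def rowsAt (u : ℕ) : List (Fin n ⊕ Fin m) := ((finRange m).filter (r · = u)).map .inr

def colsAt (u : ℕ) : List (Fin n ⊕ Fin m) := ((finRange n).filter (c · = u)).map .inl

def block (u : ℕ) : List (Fin n ⊕ Fin m) := rowsAt r u ++ colsAt c u ++ (rowsAt r u).reverse

def word (P : ℕ) : List (Fin n ⊕ Fin m) := (range P).flatMap (block r c)

variable {r c}

theorem mem_block {u : ℕ} {v : Fin n ⊕ Fin m} : v ∈ block r c u ↔ level r c v = u := by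
  cases v <;> simp [block, rowsAt, colsAt, level]

theorem filter_block (p : Fin n ⊕ Fin m → Bool) (u : ℕ) :
    (block r c u).filter p =
      (rowsAt r u).filter p ++ (colsAt c u).filter p ++ ((rowsAt r u).filter p).reverse := by
  simp only [block, filter_append, filter_reverse]

variable {P : ℕ} {p : Fin n ⊕ Fin m → Bool}

theorem mem_word (hP : ∀ v, level r c v < P) (v : Fin n ⊕ Fin m) : v ∈ word r c P :=
  mem_flatMap.2 ⟨level r c v, mem_range.2 (hP v), mem_block.2 rfl⟩

theorem filter_word_infix {u : ℕ} (hu : u < P) :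
    (block r c u).filter p <:+: (word r c P).filter p := by
  rw [word, filter_flatMap]
  exact infix_of_mem_flatten (mem_map_of_mem (mem_range.2 hu))

theorem filter_word_of_level_eq {u : ℕ} (hu : u < P) (hp : ∀ v, p v → level r c v = u) :
    (word r c P).filter p = (block r c u).filter p := by
  rw [word, filter_flatMap]
  refine flatMap_eq_of_forall_ne_eq_nil nodup_range (mem_range.2 hu) fun w _ hw => ?_
  exact filter_eq_nil_iff.2 fun v hv hpv => hw (mem_block.1 hv ▸ hp v hpv)

theorem nodup_filter_word (hp : ∀ i, p (.inr i) = false) : ((word r c P).filter p).Nodup := by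
  rw [word, filter_flatMap, nodup_flatMap]
  constructor
  · intro u _
    have hrows : (rowsAt r u).filter p = [] := by simp [rowsAt, hp]
    rw [filter_block, hrows, nil_append, reverse_nil, append_nil]
    exact ((nodup_finRange n).filter _).map Sum.inl_injective |>.filter _
  · refine nodup_range.pairwise_of_forall_ne fun u _ w _ huw v hvu hvw => huw ?_
    rw [← mem_block.1 (mem_of_mem_filter hvu), ← mem_block.1 (mem_of_mem_filter hvw)]

theorem not_isChain_filter_word {u : ℕ} {i : Fin m} (hu : u < P) (hi : p (.inr i)) (hri : r i = u)
    (hcols : ∀ j, p (.inl j) → c j ≠ u) : ¬ ((word r c P).filter p).IsChain (· ≠ ·) := by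
  have hcols' : (colsAt c u).filter p = [] := by
    simp only [colsAt, filter_map, map_eq_nil_iff, filter_filter, filter_eq_nil_iff]
    intro j _ h
    simp only [Function.comp_apply, Bool.and_eq_true, decide_eq_true_eq] at h
    exact hcols j h.1 h.2
  have hrows : (rowsAt r u).filter p ≠ [] :=
    ne_nil_of_mem (mem_filter.2 ⟨by simp [rowsAt, hri], hi⟩)
  obtain ⟨z, hz⟩ := exists_pair_infix_append_reverse hrows
  have hblock :
      (block r c u).filter p = (rowsAt r u).filter p ++ ((rowsAt r u).filter p).reverse := by
    rw [filter_block, hcols', append_nil]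
  exact not_isChain_ne_of_infix (hz.trans (hblock ▸ filter_word_infix hu))

theorem filter_word_eq_triple {u : ℕ} {i : Fin m} {j : Fin n} (hu : u < P) (hri : r i = u)
    (hcj : c j = u) (hp : ∀ v, p v ↔ v = .inl j ∨ v = .inr i) :
    (word r c P).filter p = [.inr i, .inl j, .inr i] := by
  rw [filter_word_of_level_eq hu fun v hv => by rcases (hp v).1 hv with rfl | rfl <;> assumption,
    filter_block]
  have hrows : (rowsAt r u).filter p = [.inr i] := by
    rw [rowsAt, filter_map, filter_filter]
    rw [filter_eq_singleton_of_nodup (nodup_finRange m) (mem_finRange i) (by simp [hp, hri])]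
    rfl
  have hcols : (colsAt c u).filter p = [.inl j] := by
    rw [colsAt, filter_map, filter_filter]
    rw [filter_eq_singleton_of_nodup (nodup_finRange n) (mem_finRange j) (by simp [hp, hcj])]
    rfl
  rw [hrows, hcols]
  rfl

theorem adj_inl_inr_iff_isChain {M : Fin m → Fin n → Bool} (hM : ∀ i j, M i j = true ↔ r i = c j)
    (hP : ∀ v, level r c v < P) {j : Fin n} {i : Fin m}
    (hp : ∀ v, p v ↔ v = .inl j ∨ v = .inr i) :
    (splitGraph M).Adj (.inl j) (.inr i) ↔ ((word r c P).filter p).IsChain (· ≠ ·) := by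
  rw [splitGraph_adj_inl_inr, hM]
  by_cases hij : r i = c j
  · rw [filter_word_eq_triple (hP (.inl j)) hij rfl hp]
    simp [hij]
  · refine iff_of_false hij (not_isChain_filter_word (hP (.inr i)) (by simp [hp]) rfl ?_)
    intro j' hj'
    obtain rfl : j' = j := by simpa [hp] using hj'
    exact Ne.symm hij

theorem wordRepresents_word {M : Fin m → Fin n → Bool} (hM : ∀ i j, M i j = true ↔ r i = c j)
    (hP : ∀ v, level r c v < P) : WordRepresents (word r c P) (splitGraph M) := by
  refine ⟨mem_word hP, fun x y hxy => ?_⟩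
  -- Stated with `decide`: here `==` would elaborate to `Sum.instBEq`, not to the instance
  -- `instBEqOfDecidableEq` used in `WordRepresents`.
  have hp : ∀ v, (decide (v = x) || decide (v = y)) ↔ v = x ∨ v = y := by simp
  rcases x with j | i <;> rcases y with j' | i'
  · refine iff_of_true (splitGraph_adj_inl_inl.2 fun h => hxy (h ▸ rfl)) (Pairwise.isChain ?_)
    exact nodup_filter_word fun i => by simp
  · exact adj_inl_inr_iff_isChain hM hP hp
  · rw [SimpleGraph.adj_comm]
    exact adj_inl_inr_iff_isChain hM hP fun v => (hp v).trans or_comm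
  · refine iff_of_false splitGraph_not_adj_inr_inr
      (not_isChain_filter_word (hP (.inr i)) (by simp) rfl fun j hj => ?_)
    simp at hj

end Levels

theorem wordRepresentable_splitGraph_of_levels {m n : ℕ} (M : Fin m → Fin n → Bool)
    (r : Fin m → ℕ) (c : Fin n → ℕ)
    (hM : ∀ i j, M i j = true ↔ r i = c j) : WordRepresentable (splitGraph M) := by
  obtain ⟨B, hB⟩ := Finite.exists_le (Levels.level r c)
  exact ⟨Levels.word r c (B + 1), Levels.wordRepresents_word hM fun v => Nat.lt_succ_of_le (hB v)⟩

-- Adding `1` to `n` turns its trailing binary `1`s into `0`s.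
def trailingOnes (n : ℕ) : ℕ := padicValNat 2 (n + 1)

theorem trailingOnes_of_even {n : ℕ} (h : n % 2 = 0) : trailingOnes n = 0 :=
  padicValNat.eq_zero_of_not_dvd (by omega)

theorem trailingOnes_of_odd {n : ℕ} (h : n % 2 = 1) :
    trailingOnes n = trailingOnes (n / 2) + 1 := by
  have : n + 1 = 2 * (n / 2 + 1) := by omega
  rw [trailingOnes, trailingOnes, this, padicValNat.mul two_ne_zero (Nat.succ_ne_zero _),
    padicValNat_self, add_comm]

theorem trailingOnes_le {n k : ℕ} (h : n < 2 ^ k) : trailingOnes n ≤ k :=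
  (Nat.pow_le_pow_iff_right one_lt_two).1 <|
    (Nat.le_of_dvd n.succ_pos pow_padicValNat_dvd).trans h

theorem morphIter_eq_decide (k : ℕ) (i j : Fin (2 ^ k)) :
    morphIter ![![true, false], ![false, false]] ![![true, false], ![false, true]] k i j =
      decide (trailingOnes i = trailingOnes j ∧ trailingOnes i < k) := by
  induction k with
  | zero => simp [morphIter]
  | succ k ih =>
    rw [morphIter, ih]
    rcases Nat.mod_two_eq_zero_or_one i with hi | hi <;>
      rcases Nat.mod_two_eq_zero_or_one j with hj | hj <;>
      simp [hi, hj, trailingOnes_of_even, trailingOnes_of_odd, Fin.mk_one]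

theorem stmt17 :
    ∀ k : ℕ, WordRepresentable
      (Gk ![![true, false], ![false, false]] ![![true, false], ![false, true]] k) := by
  intro k
  -- The last row `2 ^ k - 1` has no neighbours; it is put on the unused level `k + 1`.
  refine wordRepresentable_splitGraph_of_levels _
    (fun i => if trailingOnes i < k then trailingOnes i else k + 1) (fun j => trailingOnes j)
    fun i j => ?_
  have := trailingOnes_le j.isLt
  rw [morphIter_eq_decide, decide_eq_true_iff]
  split_ifs <;> omega
end
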